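/- Let f, g : ℝ^N → ℝ be quasiconvex functions such that f = g almost everywhere with respect to Lebesgue measure, and let m ∈ [−∞, ∞) denote their common essential infimum over ℝ^N. For x ∈ ℝ^N, the point x is a point of approximate continuity of g but not a point of approximate continuity of f if and only if: x is a point of approximate continuity of g, m is finite, g(x) = m, and f(x) < m. -/

import Mathlib

open MeasureTheory Metric Filter

/-- `f` is approximately continuous at `x` if for every `ε > 0` the set
`{y | |f y - f x| < ε}` has Lebesgue density `1` at `x`. -/
def ApproxContinuousAt {N : ℕ} (f : EuclideanSpace ℝ (Fin N) → ℝ)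
    (x : EuclideanSpace ℝ (Fin N)) : Prop :=
  ∀ ε : ℝ, 0 < ε →
    Tendsto (fun r : ℝ => volume ({y | |f y - f x| < ε} ∩ ball x r) / volume (ball x r))
      (nhdsWithin 0 (Set.Ioi 0)) (nhds 1)

/-!
Two facts about a convex set `S` drive the argument. If `x ∉ S`, the point reflection through
`x` shows that `S` has density at most `1/2` in every ball around `x`. If `x ∈ S` and `|S| > 0`,
the homotheties centred at `x` show that `r ↦ |S ∩ B(x, r)| / |B(x, r)|` is nonincreasing, so it
stays bounded away from `0` as `r → 0`.

If `g` is approximately continuous at `x` and `f = g` a.e., then `g x` is an approximate limit of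
`f` at `x`, so each sublevel set `{f < b}` with `b > g x` has density one at `x`. By the first fact
`f x ≤ g x`, and since such sets are not null, `m ≤ g x`. If moreover `f x < g x`, then for
`f x < b < g x` the set `{f < b}` contains `x` but has density zero there, so by the second fact it
is null, whence `g x ≤ m`. Conversely, approximate limits are unique, so `f x < m = g x` forbids
approximate continuity of `f` at `x`.
-/

open Set
open scoped ENNReal Topology

section Density

variable {X : Type*} [PseudoMetricSpace X] [MeasurableSpace X] {μ : Measure X}
  {s t : Set X} {x : X}

noncomputable def densityRatio (μ : Measure X) (s : Set X) (x : X) (r : ℝ) : ℝ≥0∞ :=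
  μ (s ∩ ball x r) / μ (ball x r)

def IsDensityPoint (μ : Measure X) (s : Set X) (x : X) : Prop :=
  Tendsto (densityRatio μ s x) (𝓝[>] 0) (𝓝 1)

def HasApproxLimit (μ : Measure X) (g : X → ℝ) (x : X) (c : ℝ) : Prop :=
  ∀ ε : ℝ, 0 < ε → IsDensityPoint μ {y | |g y - c| < ε} x

theorem densityRatio_le_one (r : ℝ) : densityRatio μ s x r ≤ 1 :=
  (ENNReal.div_le_div_right (measure_mono inter_subset_right) _).trans ENNReal.div_self_le_one

theorem densityRatio_add_densityRatio_le_one (hst : Disjoint s t) (ht : NullMeasurableSet t μ)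
    (r : ℝ) : densityRatio μ s x r + densityRatio μ t x r ≤ 1 := by
  rw [densityRatio, densityRatio, ENNReal.div_add_div_same]
  refine (ENNReal.div_le_div_right ?_ _).trans ENNReal.div_self_le_one
  calc μ (s ∩ ball x r) + μ (t ∩ ball x r)
      ≤ μ (ball x r \ t) + μ (ball x r ∩ t) :=
        add_le_add (measure_mono fun y hy => ⟨hy.2, hst.notMem_of_mem_left hy.1⟩)
          (measure_mono (inter_comm _ _).subset)
    _ = μ (ball x r) := by rw [add_comm, measure_inter_add_sdiff₀ _ ht]

theorem IsDensityPoint.mono_ae (h : IsDensityPoint μ s x) (hst : s ≤ᵐ[μ] t) :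
    IsDensityPoint μ t x :=
  tendsto_of_tendsto_of_tendsto_of_le_of_le h tendsto_const_nhds
    (fun _ => ENNReal.div_le_div_right (measure_mono_ae (hst.inter EventuallyLE.rfl)) _)
    (fun _ => densityRatio_le_one _)

theorem IsDensityPoint.measure_ne_zero (h : IsDensityPoint μ s x) : μ s ≠ 0 := by
  intro hs
  have hzero : densityRatio μ s x = 0 := funext fun r => by
    simp [densityRatio, measure_mono_null inter_subset_left hs]
  rw [IsDensityPoint, hzero] at h
  exact zero_ne_one (tendsto_nhds_unique tendsto_const_nhds h)

theorem IsDensityPoint.tendsto_densityRatio_zero_of_disjoint (h : IsDensityPoint μ s x)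
    (hst : Disjoint s t) (ht : NullMeasurableSet t μ) :
    Tendsto (densityRatio μ t x) (𝓝[>] 0) (𝓝 0) := by
  have hcompl : Tendsto (fun r => 1 - densityRatio μ s x r) (𝓝[>] 0) (𝓝 0) := by
    simpa using ENNReal.Tendsto.sub tendsto_const_nhds h (Or.inl ENNReal.one_ne_top)
  refine tendsto_of_tendsto_of_tendsto_of_le_of_le tendsto_const_nhds hcompl (fun _ => zero_le)
    fun r => ENNReal.le_sub_of_add_le_left ?_ (densityRatio_add_densityRatio_le_one hst ht r)
  exact ne_top_of_le_ne_top ENNReal.one_ne_top (densityRatio_le_one r)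

theorem HasApproxLimit.congr_ae {f g : X → ℝ} {c : ℝ} (hfg : f =ᵐ[μ] g) :
    HasApproxLimit μ f x c ↔ HasApproxLimit μ g x c := by
  have hband : ∀ ε : ℝ, {y | |f y - c| < ε} =ᵐ[μ] {y | |g y - c| < ε} := fun ε =>
    eventuallyEq_set.2 (hfg.mono fun y hy => by rw [mem_ofPred_eq, mem_ofPred_eq, hy])
  exact ⟨fun h ε hε => (h ε hε).mono_ae (hband ε).le,
    fun h ε hε => (h ε hε).mono_ae (hband ε).symm.le⟩

theorem HasApproxLimit.isDensityPoint_lt {g : X → ℝ} {c b : ℝ} (h : HasApproxLimit μ g x c)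
    (hcb : c < b) : IsDensityPoint μ {y | g y < b} x :=
  (h (b - c) (sub_pos.2 hcb)).mono_ae <| Eventually.of_forall fun y (hy : |g y - c| < b - c) =>
    show g y < b by linarith [(abs_lt.1 hy).2]

theorem HasApproxLimit.unique {g : X → ℝ} (hg : NullMeasurable g μ) {c₁ c₂ : ℝ}
    (h₁ : HasApproxLimit μ g x c₁) (h₂ : HasApproxLimit μ g x c₂) : c₁ = c₂ := by
  by_contra hne
  set ε := |c₁ - c₂| / 2 with hε_def
  have hε : 0 < ε := by have := abs_pos.2 (sub_ne_zero.2 hne); positivity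
  have hdisj : Disjoint {y | |g y - c₁| < ε} {y | |g y - c₂| < ε} :=
    disjoint_left.2 fun y (hy₁ : |g y - c₁| < ε) (hy₂ : |g y - c₂| < ε) => by
      have := abs_sub_le c₁ (g y) c₂
      rw [abs_sub_comm c₁ (g y)] at this
      linarith
  have hband : NullMeasurableSet {y | |g y - c₂| < ε} μ := hg measurableSet_ball
  exact zero_ne_one <| tendsto_nhds_unique
    ((h₁ ε hε).tendsto_densityRatio_zero_of_disjoint hdisj hband) (h₂ ε hε)

end Density

theorem coe_le_essInf_iff_measure_lt_eq_zero {α : Type*} [MeasurableSpace α] {μ : Measure α}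
    {f : α → ℝ} {b : ℝ} :
    (b : EReal) ≤ essInf (fun y => (f y : EReal)) μ ↔ μ {y | f y < b} = 0 := by
  refine ⟨fun h => ?_, fun h => le_essInf_of_ae_le _ ?_⟩
  · refine measure_mono_null (fun y (hy : f y < b) => ?_)
      (ae_iff.1 (ae_essInf_le (μ := μ) (f := fun y => (f y : EReal))))
    exact not_le.2 ((EReal.coe_lt_coe_iff.2 hy).trans_le h)
  · exact (measure_eq_zero_iff_ae_notMem.1 h).mono fun y hy =>
      EReal.coe_le_coe_iff.2 (not_lt.1 hy)

theorem essInf_coe_eq_of_measure_lt {α : Type*} [MeasurableSpace α] {μ : Measure α}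
    {f : α → ℝ} {c : ℝ} (h₀ : ∀ b < c, μ {y | f y < b} = 0)
    (h₁ : ∀ b, c < b → μ {y | f y < b} ≠ 0) :
    essInf (fun y => (f y : EReal)) μ = c := by
  refine le_antisymm (EReal.le_of_forall_lt_iff_le.1 fun b hb => ?_)
    (EReal.ge_of_forall_gt_iff_ge.1 fun b hb =>
      coe_le_essInf_iff_measure_lt_eq_zero.2 (h₀ b (EReal.coe_lt_coe_iff.1 hb)))
  by_contra hle
  exact h₁ b (EReal.coe_lt_coe_iff.1 hb)
    (coe_le_essInf_iff_measure_lt_eq_zero.1 (not_le.1 hle).le)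

section Convex

variable {E : Type*} [NormedAddCommGroup E] [NormedSpace ℝ E] [MeasurableSpace E] [BorelSpace E]
  [FiniteDimensional ℝ E] (μ : Measure E) [μ.IsAddHaarMeasure] {S : Set E} {x : E}

-- The point reflection through `x` maps `S ∩ ball x r` into the ball, disjointly from itself.
theorem Convex.two_mul_measure_inter_ball_le (hS : Convex ℝ S) (hx : x ∉ S) (r : ℝ) :
    2 * μ (S ∩ ball x r) ≤ μ (ball x r) := by
  set T := S ∩ ball x r
  set T' := AffineMap.homothety x (-1 : ℝ) '' T
  have hT' : μ T' = μ T := by simp [T']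
  have hdisj : Disjoint T' T := by
    refine disjoint_left.2 ?_
    rintro _ ⟨y, hyT, rfl⟩ hy'T
    refine hx ?_
    convert hS hyT.1 hy'T.1 (by norm_num : (0 : ℝ) ≤ 1 / 2) (by norm_num : (0 : ℝ) ≤ 1 / 2)
      (by norm_num) using 1
    rw [AffineMap.homothety_apply, vsub_eq_sub, vadd_eq_add]
    module
  have hsub : T' ∪ T ⊆ ball x r := by
    refine union_subset ?_ inter_subset_right
    rintro _ ⟨y, hyT, rfl⟩
    rw [mem_ball, dist_comm, dist_center_homothety]
    simpa [dist_comm] using hyT.2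
  calc 2 * μ T = μ (T' ∪ T) := by
        rw [measure_union₀ ((hS.nullMeasurableSet μ).inter measurableSet_ball.nullMeasurableSet)
          hdisj.aedisjoint, hT', two_mul]
    _ ≤ μ (ball x r) := measure_mono hsub

theorem Convex.mem_of_isDensityPoint (hS : Convex ℝ S) (h : IsDensityPoint μ S x) : x ∈ S := by
  by_contra hx
  have hhalf : ∀ r, densityRatio μ S x r ≤ 2⁻¹ := fun r => by
    refine ENNReal.div_le_of_le_mul ?_
    rw [← ENNReal.div_eq_inv_mul, ENNReal.le_div_iff_mul_le (by simp) (by simp), mul_comm]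
    exact hS.two_mul_measure_inter_ball_le μ hx r
  exact (ENNReal.inv_lt_one.2 ENNReal.one_lt_two).not_ge
    (le_of_tendsto h (Eventually.of_forall hhalf))

-- The homothety of ratio `r / R` centred at `x ∈ S` maps `S ∩ ball x R` into `S ∩ ball x r`.
theorem Convex.densityRatio_le_of_le (hS : Convex ℝ S) (hx : x ∈ S) {r R : ℝ} (hr : 0 < r)
    (hrR : r ≤ R) : densityRatio μ S x R ≤ densityRatio μ S x r := by
  have hR : 0 < R := hr.trans_le hrR
  set t := r / R
  have ht : 0 < t := div_pos hr hR
  have hrt : r = t * R := (div_mul_cancel₀ r hR.ne').symm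
  set k := ENNReal.ofReal (t ^ Module.finrank ℝ E)
  have hk : k ≠ 0 := by simp [k]; positivity
  have himage : AffineMap.homothety x t '' (S ∩ ball x R) ⊆ S ∩ ball x r := by
    rintro _ ⟨y, ⟨hyS, hyR⟩, rfl⟩
    refine ⟨?_, ?_⟩
    · rw [AffineMap.homothety_eq_lineMap]
      exact hS.lineMap_mem hx hyS ⟨ht.le, div_le_one_of_le₀ hrR hR.le⟩
    · rw [mem_ball, dist_comm, dist_center_homothety, Real.norm_of_nonneg ht.le, hrt, dist_comm]
      exact mul_lt_mul_of_pos_left hyR ht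
  have hball : μ (ball x r) = k * μ (ball x R) := by
    rw [hrt, Measure.addHaar_ball_mul_of_pos μ x ht, Measure.addHaar_ball_center μ x R]
  rw [densityRatio, densityRatio, hball, ← ENNReal.mul_div_mul_left _ _ hk ENNReal.ofReal_ne_top]
  gcongr
  calc k * μ (S ∩ ball x R) = μ (AffineMap.homothety x t '' (S ∩ ball x R)) := by
        rw [Measure.addHaar_image_homothety, abs_of_pos (by positivity)]
    _ ≤ μ (S ∩ ball x r) := measure_mono himage

theorem Convex.not_tendsto_densityRatio_zero (hS : Convex ℝ S) (hx : x ∈ S) (hμ : μ S ≠ 0) :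
    ¬ Tendsto (densityRatio μ S x) (𝓝[>] 0) (𝓝 0) := by
  intro h
  obtain ⟨n, hn⟩ : ∃ n : ℕ, μ (S ∩ ball x (n + 1)) ≠ 0 := by
    by_contra! hall
    refine hμ (measure_mono_null (fun y hy => ?_) (measure_iUnion_null hall))
    obtain ⟨n, hn⟩ := mem_iUnion.1 ((iUnion_ball_nat_succ x).symm ▸ mem_univ y)
    exact mem_iUnion.2 ⟨n, hy, hn⟩
  have hpos : 0 < densityRatio μ S x (n + 1) :=
    ENNReal.div_pos hn measure_ball_lt_top.ne
  obtain ⟨r, hr, hr_mem⟩ := ((h.eventually (gt_mem_nhds hpos)).and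
    (Ioo_mem_nhdsGT (by positivity : (0 : ℝ) < n + 1))).exists
  exact hr.not_ge (hS.densityRatio_le_of_le μ hx hr_mem.1 hr_mem.2.le)

variable {μ} {f : E → ℝ} {c : ℝ}

theorem apply_le_of_hasApproxLimit (hf : ∀ b : ℝ, Convex ℝ {y | f y < b})
    (h : HasApproxLimit μ f x c) : f x ≤ c :=
  le_of_forall_gt fun b hcb => (hf b).mem_of_isDensityPoint μ (h.isDensityPoint_lt hcb)

theorem measure_lt_eq_zero_of_hasApproxLimit (hf : ∀ b : ℝ, Convex ℝ {y | f y < b})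
    (h : HasApproxLimit μ f x c) (hfx : f x < c) {b : ℝ} (hbc : b < c) :
    μ {y | f y < b} = 0 := by
  obtain ⟨b', hb', hb'c⟩ := exists_between (max_lt hbc hfx)
  have hdisj : Disjoint {y | |f y - c| < c - b'} {y | f y < b'} :=
    disjoint_left.2 fun y (hy : |f y - c| < c - b') (hy' : f y < b') => by
      linarith [(abs_lt.1 hy).1]
  have hnull : μ {y | f y < b'} = 0 := by
    by_contra hne
    exact (hf b').not_tendsto_densityRatio_zero μ ((le_max_right _ _).trans_lt hb') hne
      ((h _ (sub_pos.2 hb'c)).tendsto_densityRatio_zero_of_disjoint hdisj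
        ((hf b').nullMeasurableSet μ))
  exact measure_mono_null (fun y (hy : f y < b) =>
    show f y < b' from hy.trans_le ((le_max_left _ _).trans hb'.le)) hnull

end Convex

theorem stmt_12_general {N : ℕ} (f g : EuclideanSpace ℝ (Fin N) → ℝ)
    (hf : ∀ α : ℝ, Convex ℝ {x | f x < α}) (hg : ∀ α : ℝ, Convex ℝ {x | g x < α})
    (hfg : f =ᵐ[volume] g) (m : EReal)
    (hm : m = essInf (fun x => (f x : EReal)) volume)
    (x : EuclideanSpace ℝ (Fin N)) :
    (ApproxContinuousAt g x ∧ ¬ ApproxContinuousAt f x) ↔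
      (ApproxContinuousAt g x ∧ m ≠ ⊥ ∧ (g x : EReal) = m ∧ (f x : EReal) < m) := by
  have hlim : ∀ c, HasApproxLimit volume f x c ↔ HasApproxLimit volume g x c :=
    fun _ => HasApproxLimit.congr_ae hfg
  have hg_meas : NullMeasurable g volume := measurable_of_Iio fun b => (hg b).nullMeasurableSet _
  constructor
  · rintro ⟨hgx, hfx⟩
    have hf_lim : HasApproxLimit volume f x (g x) := (hlim _).2 hgx
    have hlt : f x < g x :=
      (apply_le_of_hasApproxLimit hf hf_lim).lt_of_ne fun h =>
        hfx (show HasApproxLimit volume f x (f x) from h ▸ hf_lim)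
    have hmg : m = g x := hm ▸ essInf_coe_eq_of_measure_lt
      (fun _ => measure_lt_eq_zero_of_hasApproxLimit hf hf_lim hlt)
      (fun _ hb => (hf_lim.isDensityPoint_lt hb).measure_ne_zero)
    exact ⟨hgx, hmg ▸ EReal.coe_ne_bot _, hmg.symm, hmg ▸ EReal.coe_lt_coe_iff.2 hlt⟩
  · rintro ⟨hgx, -, hgm, hfm⟩
    refine ⟨hgx, fun hfx => hfm.ne ?_⟩
    rw [← hgm, ((hlim _).1 hfx).unique hg_meas hgx]

theorem stmt_12 {N : ℕ} (f g : EuclideanSpace ℝ (Fin N) → ℝ)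
    (hf : ∀ α : ℝ, Convex ℝ {x | f x < α}) (hg : ∀ α : ℝ, Convex ℝ {x | g x < α})
    (hfg : f =ᵐ[volume] g) (m : EReal)
    (hm : m = essInf (fun x => (f x : EReal)) volume) (hmtop : m ≠ ⊤)
    (x : EuclideanSpace ℝ (Fin N)) :
    (ApproxContinuousAt g x ∧ ¬ ApproxContinuousAt f x) ↔
      (ApproxContinuousAt g x ∧ m ≠ ⊥ ∧ (g x : EReal) = m ∧ (f x : EReal) < m) :=
  stmt_12_general f g hf hg hfg m hm x
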